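/- arXiv:2302.11691 — 4 statements merged into one kernel-verified Lean document; each statement's English description precedes it below -/
import Mathlib

section
/- Let n ≥ 2 and L ≥ 0 be integers, let P ∈ ℂ[w₁,…,wₙ,v₁,…,vₙ] be bihomogeneous of bidegree (L,L), and let Ψ = X^{-L}·P, viewed as a holomorphic function on the open set U = {(w,v) ∈ ℂⁿ × ℂⁿ : X(w,v) ≠ 0}. Let Ĥ be the operator Ĥf = −X·∑_{α=1}^n ∂²f/∂w_α∂v_α. Then: (i) if ΔP = 0, then ĤΨ = L(L+n−1)·Ψ on U; and (ii) conversely, if ĤΨ = L(L+n−1)·Ψ holds on U, then ΔP = 0. (This is Theorem 1 of the paper: the ansatz wave function is an eigenfunction of the Hamiltonian with eigenvalue E(n,L,q=0) = L(L+n−1) exactly when the coefficient tensor is traceless.) -/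
open MvPolynomial

noncomputable section

/-- Weight function giving the degree in the `w`-variables (indexed by `Sum.inl`). -/
def wWt (n : ℕ) : (Fin n ⊕ Fin n) → ℕ := Sum.elim (fun _ => 1) (fun _ => 0)

/-- Weight function giving the degree in the `v`-variables (indexed by `Sum.inr`). -/
def vWt (n : ℕ) : (Fin n ⊕ Fin n) → ℕ := Sum.elim (fun _ => 0) (fun _ => 1)

/-- The complex Laplacian `Δ = ∑_α ∂²/∂w_α∂v_α` on polynomials. -/
def polyLap (n : ℕ) (P : MvPolynomial (Fin n ⊕ Fin n) ℂ) : MvPolynomial (Fin n ⊕ Fin n) ℂ :=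
  ∑ α : Fin n, pderiv (Sum.inl α) (pderiv (Sum.inr α) P)

/-- `X(w,v) = ∑_α w_α v_α`. -/
def XvalC (n : ℕ) (p : (Fin n → ℂ) × (Fin n → ℂ)) : ℂ := ∑ α : Fin n, p.1 α * p.2 α

/-- Evaluation of a polynomial at the point `(w, v)`. -/
def evalWV (n : ℕ) (P : MvPolynomial (Fin n ⊕ Fin n) ℂ)
    (p : (Fin n → ℂ) × (Fin n → ℂ)) : ℂ :=
  MvPolynomial.eval (Sum.elim p.1 p.2) P

/-- The operator `Ĥ f = −X · ∑_α ∂²f/∂w_α∂v_α` on functions on `ℂⁿ × ℂⁿ`. -/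
def Hop (n : ℕ) (f : (Fin n → ℂ) × (Fin n → ℂ) → ℂ)
    (p : (Fin n → ℂ) × (Fin n → ℂ)) : ℂ :=
  -(XvalC n p) * ∑ α : Fin n,
    fderiv ℂ (fun q => fderiv ℂ f q (Pi.single α 1, 0)) p (0, Pi.single α 1)

/-!
Write `Ψ = X^m P` with `m = -L`. On `{X ≠ 0}` the product rule gives
`∂²Ψ/∂w_α∂v_α = X^m ∂²P/∂w_α∂v_α + m X^(m-1) (w_α ∂P/∂w_α + ∂(v_α P)/∂v_α) + m(m-1) X^(m-2) w_α v_α P`,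
and summing over `α` with Euler's identity for the two partial degrees of `P` yields
`ĤΨ = -X^(m+1) ΔP + L(L+n-1) Ψ`. So the eigenvalue equation holds iff `ΔP` vanishes on `{X ≠ 0}`,
i.e. iff `X · ΔP = 0` as a polynomial, i.e. iff `ΔP = 0`.
-/

namespace MvPolynomial

theorem pderiv_pderiv_comm {R σ : Type*} [CommRing R] (i j : σ) (P : MvPolynomial σ R) :
    pderiv i (pderiv j P) = pderiv j (pderiv i P) := by
  classical
  have h : ⁅pderiv i, pderiv j⁆ = (0 : Derivation R (MvPolynomial σ R) (MvPolynomial σ R)) :=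
    derivation_ext fun k => by
      rw [Derivation.commutator_apply, pderiv_X, pderiv_X, Pi.single_apply, Pi.single_apply]
      split_ifs <;> simp
  simpa [Derivation.commutator_apply, sub_eq_zero] using congr($h P)

variable {𝕜 σ : Type*} [NontriviallyNormedField 𝕜] [Fintype σ]

def evalFDeriv (Q : MvPolynomial σ 𝕜) (x : σ → 𝕜) : (σ → 𝕜) →L[𝕜] 𝕜 :=
  ∑ i, eval x (pderiv i Q) • ContinuousLinearMap.proj (R := 𝕜) (φ := fun _ : σ => 𝕜) i

theorem evalFDeriv_apply_single [DecidableEq σ] (Q : MvPolynomial σ 𝕜) (x : σ → 𝕜) (i : σ) :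
    evalFDeriv Q x (Pi.single i 1) = eval x (pderiv i Q) := by
  simp [evalFDeriv, Pi.single_apply]

theorem hasFDerivAt_eval (Q : MvPolynomial σ 𝕜) (x : σ → 𝕜) :
    HasFDerivAt (fun y : σ → 𝕜 => eval y Q) (evalFDeriv Q x) x := by
  classical
  induction Q using MvPolynomial.induction_on with
  | C a =>
    simp only [eval_C]
    refine (hasFDerivAt_const (𝕜 := 𝕜) a x).congr_fderiv ?_
    ext d
    simp [evalFDeriv]
  | add p q hp hq =>
    simp only [map_add]
    refine (hp.add hq).congr_fderiv ?_
    ext d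
    simp [evalFDeriv, add_mul, Finset.sum_add_distrib]
  | mul_X p i hp =>
    simp only [map_mul, eval_X]
    refine (hp.mul (hasFDerivAt_apply i x)).congr_fderiv ?_
    ext d
    simp [evalFDeriv, pderiv_X, Pi.single_apply, apply_ite (eval x), add_mul,
      Finset.sum_add_distrib, Finset.mul_sum, mul_assoc]

end MvPolynomial

open Sum

section AnsatzCalculus

variable {n : ℕ}

abbrev WV (n : ℕ) := (Fin n → ℂ) × (Fin n → ℂ)

def sumElimCLM (n : ℕ) : WV n →L[ℂ] (Fin n ⊕ Fin n → ℂ) :=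
  LinearMap.toContinuousLinearMap (LinearEquiv.sumArrowLequivProdArrow _ _ ℂ ℂ).symm.toLinearMap

theorem sumElimCLM_apply (p : WV n) : sumElimCLM n p = Sum.elim p.1 p.2 := rfl

def coordVec (n : ℕ) : Fin n ⊕ Fin n → WV n :=
  Sum.elim (fun α => (Pi.single α 1, 0)) (fun α => (0, Pi.single α 1))

theorem sumElimCLM_coordVec (i : Fin n ⊕ Fin n) :
    sumElimCLM n (coordVec n i) = Pi.single i 1 := by
  ext j
  cases i <;> cases j <;> simp [coordVec, sumElimCLM_apply, Pi.single_apply]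

def evalWVFDeriv (n : ℕ) (Q : MvPolynomial (Fin n ⊕ Fin n) ℂ) (p : WV n) : WV n →L[ℂ] ℂ :=
  (evalFDeriv Q (sumElimCLM n p)).comp (sumElimCLM n)

theorem hasFDerivAt_evalWV (Q : MvPolynomial (Fin n ⊕ Fin n) ℂ) (p : WV n) :
    HasFDerivAt (evalWV n Q) (evalWVFDeriv n Q p) p :=
  (hasFDerivAt_eval Q _).comp p (sumElimCLM n).hasFDerivAt

theorem evalWVFDeriv_coordVec (Q : MvPolynomial (Fin n ⊕ Fin n) ℂ) (p : WV n)
    (i : Fin n ⊕ Fin n) : evalWVFDeriv n Q p (coordVec n i) = evalWV n (pderiv i Q) p := by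
  rw [evalWVFDeriv, ContinuousLinearMap.comp_apply, sumElimCLM_coordVec, evalFDeriv_apply_single]
  rfl

def xPoly (n : ℕ) : MvPolynomial (Fin n ⊕ Fin n) ℂ :=
  ∑ α, X (inl α) * X (inr α)

theorem evalWV_xPoly : evalWV n (xPoly n) = XvalC n := by
  ext p
  simp [evalWV, xPoly, XvalC]

theorem pderiv_xPoly (i : Fin n ⊕ Fin n) : pderiv i (xPoly n) = X i.swap := by
  cases i <;> simp [xPoly, pderiv_X, Pi.single_apply]

theorem xPoly_ne_zero (hn : n ≠ 0) : xPoly n ≠ 0 := fun h => by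
  simpa [xPoly, hn] using congr_arg (eval 1) h

def ansatz (n : ℕ) (m : ℤ) (Q : MvPolynomial (Fin n ⊕ Fin n) ℂ) (q : WV n) : ℂ :=
  XvalC n q ^ m * evalWV n Q q

theorem ansatz_sum {ι : Type*} (s : Finset ι) (m : ℤ) (Q : ι → MvPolynomial (Fin n ⊕ Fin n) ℂ)
    (q : WV n) : ansatz n m (∑ i ∈ s, Q i) q = ∑ i ∈ s, ansatz n m (Q i) q := by
  simp [ansatz, evalWV, Finset.mul_sum]

theorem ansatz_nsmul (m : ℤ) (k : ℕ) (Q : MvPolynomial (Fin n ⊕ Fin n) ℂ) (q : WV n) :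
    ansatz n m (k • Q) q = k * ansatz n m Q q := by
  simp only [ansatz, evalWV, nsmul_eq_mul, map_mul, map_natCast]
  ring

theorem XvalC_mul_ansatz {q : WV n} (hq : XvalC n q ≠ 0) (m : ℤ)
    (Q : MvPolynomial (Fin n ⊕ Fin n) ℂ) : XvalC n q * ansatz n m Q q = ansatz n (m + 1) Q q := by
  rw [ansatz, ansatz, zpow_add_one₀ hq]
  ring

theorem ansatz_xPoly_mul {q : WV n} (hq : XvalC n q ≠ 0) (m : ℤ)
    (Q : MvPolynomial (Fin n ⊕ Fin n) ℂ) : ansatz n (m - 1) (xPoly n * Q) q = ansatz n m Q q := by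
  have hmul : evalWV n (xPoly n * Q) q = XvalC n q * evalWV n Q q := by
    simp [← evalWV_xPoly, evalWV]
  rw [ansatz, ansatz, hmul, zpow_sub_one₀ hq]
  field_simp

theorem hasFDerivAt_ansatz {p : WV n} (hp : XvalC n p ≠ 0) (m : ℤ)
    (Q : MvPolynomial (Fin n ⊕ Fin n) ℂ) :
    HasFDerivAt (ansatz n m Q) (XvalC n p ^ m • evalWVFDeriv n Q p
      + (evalWV n Q p * (m * XvalC n p ^ (m - 1))) • evalWVFDeriv n (xPoly n) p) p := by
  have hX := hasFDerivAt_evalWV (xPoly n) p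
  rw [evalWV_xPoly] at hX
  refine (((hasDerivAt_zpow m _ (Or.inl hp)).comp_hasFDerivAt p hX).mul
    (hasFDerivAt_evalWV Q p)).congr_fderiv ?_
  rw [smul_smul]
  rfl

theorem fderiv_ansatz_coordVec {p : WV n} (hp : XvalC n p ≠ 0) (m : ℤ)
    (Q : MvPolynomial (Fin n ⊕ Fin n) ℂ) (i : Fin n ⊕ Fin n) :
    fderiv ℂ (ansatz n m Q) p (coordVec n i)
      = ansatz n m (pderiv i Q) p + m * ansatz n (m - 1) (X i.swap * Q) p := by
  rw [(hasFDerivAt_ansatz hp m Q).fderiv]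
  simp only [add_apply, smul_apply, smul_eq_mul, evalWVFDeriv_coordVec, pderiv_xPoly, ansatz,
    evalWV, map_mul, eval_X]
  ring

theorem fderiv_fderiv_ansatz_coordVec {p : WV n} (hp : XvalC n p ≠ 0) (m : ℤ)
    (Q : MvPolynomial (Fin n ⊕ Fin n) ℂ) (i j : Fin n ⊕ Fin n) :
    fderiv ℂ (fun q => fderiv ℂ (ansatz n m Q) q (coordVec n i)) p (coordVec n j)
      = ansatz n m (pderiv j (pderiv i Q)) p
        + m * ansatz n (m - 1) (X j.swap * pderiv i Q + pderiv j (X i.swap * Q)) p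
        + m * (m - 1) * ansatz n (m - 1 - 1) (X j.swap * (X i.swap * Q)) p := by
  have hU : ∀ᶠ q in nhds p, XvalC n q ≠ 0 :=
    ((hasFDerivAt_evalWV (xPoly n) p).continuousAt.eventually_ne (by rwa [evalWV_xPoly])).mono
      fun q hq => by rwa [evalWV_xPoly] at hq
  have hfirst : (fun q => fderiv ℂ (ansatz n m Q) q (coordVec n i)) =ᶠ[nhds p]
      fun q => ansatz n m (pderiv i Q) q + m * ansatz n (m - 1) (X i.swap * Q) q :=
    hU.mono fun q hq => fderiv_ansatz_coordVec hq m Q i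
  rw [hfirst.fderiv_eq, fderiv_fun_add (hasFDerivAt_ansatz hp _ _).differentiableAt
    ((hasFDerivAt_ansatz hp _ _).differentiableAt.const_mul _), fderiv_const_mul
    (hasFDerivAt_ansatz hp _ _).differentiableAt]
  simp only [add_apply, smul_apply, smul_eq_mul, fderiv_ansatz_coordVec hp, ansatz, evalWV,
    map_add, map_mul, Derivation.leibniz, pderiv_X, eval_X, Int.cast_sub, Int.cast_one]
  ring

end AnsatzCalculus

section Bidegree

variable {n L L' : ℕ} {P : MvPolynomial (Fin n ⊕ Fin n) ℂ}

theorem sum_X_inl_mul_pderiv_inl (hw : P.IsWeightedHomogeneous (wWt n) L) :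
    ∑ α, X (inl α) * pderiv (inl α) P = L • P := by
  simpa [Fintype.sum_sum_type, wWt] using hw.sum_weight_X_mul_pderiv

theorem sum_X_inr_mul_pderiv_inr (hv : P.IsWeightedHomogeneous (vWt n) L') :
    ∑ α, X (inr α) * pderiv (inr α) P = L' • P := by
  simpa [Fintype.sum_sum_type, vWt] using hv.sum_weight_X_mul_pderiv

theorem sum_pderiv_inr_pderiv_inl (P : MvPolynomial (Fin n ⊕ Fin n) ℂ) :
    ∑ α, pderiv (inr α) (pderiv (inl α) P) = polyLap n P := by
  simp only [polyLap, pderiv_pderiv_comm (inr _)]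

theorem sum_pderiv_inr_X_inr_mul (hv : P.IsWeightedHomogeneous (vWt n) L') :
    ∑ α, pderiv (inr α) (X (inr α) * P) = (L' + n) • P := by
  simp [Finset.sum_add_distrib, sum_X_inr_mul_pderiv_inr hv, add_smul]

theorem sum_X_inl_mul_X_inr_mul (P : MvPolynomial (Fin n ⊕ Fin n) ℂ) :
    ∑ α, X (inl α) * (X (inr α) * P) = xPoly n * P := by
  simp only [xPoly, Finset.sum_mul, mul_assoc]

theorem laplacian_ansatz (hw : P.IsWeightedHomogeneous (wWt n) L)
    (hv : P.IsWeightedHomogeneous (vWt n) L') {p : WV n} (hp : XvalC n p ≠ 0) (m : ℤ) :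
    ∑ α, fderiv ℂ (fun q => fderiv ℂ (ansatz n m P) q (coordVec n (inl α))) p (coordVec n (inr α))
      = ansatz n m (polyLap n P) p + m * (L + L' + n + m - 1) * ansatz n (m - 1) P p := by
  simp only [fderiv_fderiv_ansatz_coordVec hp, swap_inl, swap_inr, Finset.sum_add_distrib,
    ← Finset.mul_sum, ← ansatz_sum]
  rw [sum_pderiv_inr_pderiv_inl, sum_X_inl_mul_pderiv_inl hw, sum_pderiv_inr_X_inr_mul hv,
    ← add_smul, sum_X_inl_mul_X_inr_mul, ansatz_xPoly_mul hp, ansatz_nsmul]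
  push_cast
  ring

theorem Hop_eq (f : WV n → ℂ) (p : WV n) :
    Hop n f p = -XvalC n p *
      ∑ α, fderiv ℂ (fun q => fderiv ℂ f q (coordVec n (inl α))) p (coordVec n (inr α)) :=
  rfl

theorem Hop_ansatz (hw : P.IsWeightedHomogeneous (wWt n) L)
    (hv : P.IsWeightedHomogeneous (vWt n) L') {p : WV n} (hp : XvalC n p ≠ 0) (m : ℤ) :
    Hop n (ansatz n m P) p
      = -ansatz n (m + 1) (polyLap n P) p - m * (L + L' + n + m - 1) * ansatz n m P p := by
  rw [Hop_eq, laplacian_ansatz hw hv hp m]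
  have h1 := XvalC_mul_ansatz hp m (polyLap n P)
  have h2 := XvalC_mul_ansatz hp (m - 1) P
  rw [sub_add_cancel] at h2
  linear_combination -h1 - (m * (L + L' + n + m - 1)) * h2

end Bidegree

theorem eq_zero_of_evalWV_eq_zero_of_XvalC_ne_zero {n : ℕ} (hn : n ≠ 0)
    {Q : MvPolynomial (Fin n ⊕ Fin n) ℂ} (h : ∀ p : WV n, XvalC n p ≠ 0 → evalWV n Q p = 0) :
    Q = 0 := by
  have hmul : xPoly n * Q = 0 := MvPolynomial.funext fun x => by
    have hx := h (x ∘ inl, x ∘ inr)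
    simp only [← evalWV_xPoly, evalWV, Sum.elim_comp_inl_inr] at hx
    by_cases hX : eval x (xPoly n) = 0 <;> simp [hX, hx]
  exact (mul_eq_zero.1 hmul).resolve_left (xPoly_ne_zero hn)

theorem stmt0_general (n L : ℕ) (P : MvPolynomial (Fin n ⊕ Fin n) ℂ)
    (hw : P.IsWeightedHomogeneous (wWt n) L)
    (hv : P.IsWeightedHomogeneous (vWt n) L) :
    polyLap n P = 0 ↔
      ∀ p : (Fin n → ℂ) × (Fin n → ℂ), XvalC n p ≠ 0 →
        Hop n (fun q => (XvalC n q) ^ (-(L : ℤ)) * evalWV n P q) p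
          = ((L * (L + n - 1) : ℕ) : ℂ) *
            ((XvalC n p) ^ (-(L : ℤ)) * evalWV n P p) := by
  -- the truncated subtraction `L + n - 1` in `ℕ` is harmless: for `L = 0` both sides vanish
  have hE : ((L * (L + n - 1) : ℕ) : ℂ) = L * (L + n - 1) := by
    rcases L with _ | k
    · simp
    · rw [show k + 1 + n - 1 = k + n by omega]
      push_cast
      ring
  have hH : ∀ p : WV n, XvalC n p ≠ 0 → Hop n (ansatz n (-L) P) p
      = -ansatz n (-L + 1) (polyLap n P) p + ((L * (L + n - 1) : ℕ) : ℂ) * ansatz n (-L) P p := by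
    intro p hp
    rw [Hop_ansatz hw hv hp, hE]
    push_cast
    ring
  change polyLap n P = 0 ↔ ∀ p : WV n, XvalC n p ≠ 0 →
    Hop n (ansatz n (-L) P) p = ((L * (L + n - 1) : ℕ) : ℂ) * ansatz n (-L) P p
  refine ⟨fun hP p hp => by simp [hH p hp, hP, ansatz, evalWV], fun hP => ?_⟩
  obtain rfl | hn := eq_or_ne n 0
  · simp [polyLap]
  refine eq_zero_of_evalWV_eq_zero_of_XvalC_ne_zero hn fun p hp => ?_
  have hEigen := (hH p hp).symm.trans (hP p hp)
  have hLap : ansatz n (-L + 1) (polyLap n P) p = 0 := by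
    linear_combination -hEigen
  exact (mul_eq_zero.1 hLap).resolve_left (zpow_ne_zero _ hp)

/-- Theorem 1 of the paper: for `P` bihomogeneous of bidegree `(L,L)`, the function
`Ψ = X^{-L}·P` is an eigenfunction of `Ĥ` with eigenvalue `L(L+n−1)` on `{X ≠ 0}`
if and only if `ΔP = 0`. -/
theorem stmt0 (n L : ℕ) (hn : 2 ≤ n) (P : MvPolynomial (Fin n ⊕ Fin n) ℂ)
    (hw : P.IsWeightedHomogeneous (wWt n) L)
    (hv : P.IsWeightedHomogeneous (vWt n) L) :
    polyLap n P = 0 ↔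
      ∀ p : (Fin n → ℂ) × (Fin n → ℂ), XvalC n p ≠ 0 →
        Hop n (fun q => (XvalC n q) ^ (-(L : ℤ)) * evalWV n P q) p
          = ((L * (L + n - 1) : ℕ) : ℂ) *
            ((XvalC n p) ^ (-(L : ℤ)) * evalWV n P p) :=
  stmt0_general n L P hw hv
end
end

section
/- For all integers n ≥ 2 and L, L' ≥ 0, the following identity of natural numbers holds: (n−1)·[ C(L+n−1, n−1)·C(L'+n−1, n−1) − C(L+n−2, n−1)·C(L'+n−2, n−1) ] = (L+L'+n−1)·C(L+n−2, n−2)·C(L'+n−2, n−2), where C(a,b) denotes the binomial coefficient. (This expresses that the number of independent components of a bi-symmetric tensor of type (L,L') in n dimensions, minus the number of tracelessness constraints, equals the paper's multiplicity formula #(n,L,L') = C(L+n−2,n−2)·C(L'+n−2,n−2)·(L+L'+n−1)/(n−1).) -/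
/-- The number of independent components of a bi-symmetric tensor of type `(L,L')` in
`n` dimensions, minus the number of tracelessness constraints, equals the multiplicity
`#(n,L,L') = C(L+n−2,n−2)·C(L'+n−2,n−2)·(L+L'+n−1)/(n−1)`, stated as an identity of
natural numbers multiplied through by `n−1`. -/
theorem stmt4 (n L L' : ℕ) (hn : 2 ≤ n) :
    (n - 1) * (Nat.choose (L + n - 1) (n - 1) * Nat.choose (L' + n - 1) (n - 1)
        - Nat.choose (L + n - 2) (n - 1) * Nat.choose (L' + n - 2) (n - 1))
      = (L + L' + n - 1) * (Nat.choose (L + n - 2) (n - 2) * Nat.choose (L' + n - 2) (n - 2)) := by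
  obtain ⟨m, rfl⟩ : ∃ m, n = m + 2 := ⟨n - 2, by omega⟩
  have e1 : L + (m + 2) - 1 = L + m + 1 := by omega
  have e2 : L' + (m + 2) - 1 = L' + m + 1 := by omega
  have e3 : L + (m + 2) - 2 = L + m := by omega
  have e4 : L' + (m + 2) - 2 = L' + m := by omega
  have e5 : m + 2 - 1 = m + 1 := by omega
  have e6 : m + 2 - 2 = m := by omega
  have e7 : L + L' + (m + 2) - 1 = L + L' + m + 1 := by omega
  rw [e1, e2, e3, e4, e5, e6, e7]
  set a := Nat.choose (L + m) m with ha
  set a' := Nat.choose (L' + m) m with ha'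
  set b := Nat.choose (L + m) (m + 1) with hb
  set b' := Nat.choose (L' + m) (m + 1) with hb'
  have c1 : Nat.choose (L + m + 1) (m + 1) = a + b := Nat.choose_succ_succ _ _
  have c2 : Nat.choose (L' + m + 1) (m + 1) = a' + b' := Nat.choose_succ_succ _ _
  rw [c1, c2]
  have h1 : b * (m + 1) = a * L := by
    have := Nat.choose_succ_right_eq (L + m) m
    simpa using this
  have h2 : b' * (m + 1) = a' * L' := by
    have := Nat.choose_succ_right_eq (L' + m) m
    simpa using this
  have hsub : (a + b) * (a' + b') - b * b' = a * a' + a * b' + b * a' := by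
    have h : (a + b) * (a' + b') = a * a' + a * b' + b * a' + b * b' := by ring
    omega
  rw [hsub]
  have : (m + 1) * (a * a' + a * b' + b * a')
      = a * a' * (m + 1) + (b' * (m + 1)) * a + (b * (m + 1)) * a' := by ring
  rw [this, h1, h2]
  ring
end

section
/- Let n ≥ 2 be an integer and set m = n−1. Define the map φ : ℝ^m → ℝ^m by φ(x)_j = x_j/(1 + ∑_{k=1}^m x_k), let S = {x ∈ ℝ^m : x_j > 0 for all j}, and let Δ° = {t ∈ ℝ^m : t_j > 0 for all j and ∑_{j=1}^m t_j < 1} be the open m-simplex. Then φ restricts to a bijection from S onto Δ°, and the pushforward under φ of the measure on S with density x ↦ (1 + ∑_j x_j)^{−n} with respect to Lebesgue measure equals the Lebesgue measure restricted to Δ°. (This is the paper's Lemma: the measure ∏ dx_j/(1+∑x_j)^n corresponds to the flat measure ∏ dt_j on the simplex.) -/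
/-!
Write `c x = (1 + ∑ x)⁻¹`, so that `φ x = c x • x`; its inverse on the simplex is
`t ↦ t / (1 - ∑ t)`. The derivative of `φ` is `c • (id - c • (∑) ⊗ x)`, a scalar times a rank-one
perturbation of the identity, so by the matrix determinant lemma its Jacobian is
`c ^ m * (1 - c ∑ x) = c ^ (m + 1) = (1 + ∑ x) ^ (-n)`. The change of variables formula then
identifies the pushforward of the weighted measure with Lebesgue measure on the image `Δ°`.
-/

open MeasureTheory

theorem LinearMap.det_id_add_smulRight {ι 𝕜 : Type*} [Fintype ι] [Field 𝕜]
    (f : (ι → 𝕜) →ₗ[𝕜] 𝕜) (v : ι → 𝕜) : (LinearMap.id + f.smulRight v).det = 1 + f v := by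
  classical
  have hmat : LinearMap.toMatrix' (LinearMap.id + f.smulRight v)
      = 1 + Matrix.replicateCol Unit v * Matrix.replicateRow Unit (fun j => f (Pi.single j 1)) := by
    ext i j
    simp [LinearMap.toMatrix'_apply, Matrix.one_apply, Pi.single_apply, Matrix.mul_apply, mul_comm]
  rw [← LinearMap.det_toMatrix', hmat, Matrix.det_one_add_replicateCol_mul_replicateRow]
  conv_rhs => rw [← Finset.univ_sum_single v]
  simp only [dotProduct, map_sum]
  refine congrArg _ (Finset.sum_congr rfl fun i _ => ?_)
  rw [mul_comm, ← smul_eq_mul, ← map_smul, ← Pi.single_smul', smul_eq_mul, mul_one]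

noncomputable section

variable {ι : Type*} [Fintype ι]

variable (ι) in
def posOrthant : Set (ι → ℝ) := {x | ∀ j, 0 < x j}

variable (ι) in
def openSimplex : Set (ι → ℝ) := {t | (∀ j, 0 < t j) ∧ ∑ j, t j < 1}

def toSimplex (x : ι → ℝ) : ι → ℝ := fun j => x j / (1 + ∑ k, x k)

def ofSimplex (t : ι → ℝ) : ι → ℝ := fun j => t j / (1 - ∑ k, t k)

theorem sum_toSimplex (x : ι → ℝ) : ∑ j, toSimplex x j = (∑ k, x k) / (1 + ∑ k, x k) :=
  (Finset.sum_div ..).symm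

theorem sum_ofSimplex (t : ι → ℝ) : ∑ j, ofSimplex t j = (∑ k, t k) / (1 - ∑ k, t k) :=
  (Finset.sum_div ..).symm

theorem ofSimplex_toSimplex {x : ι → ℝ} (hx : 1 + ∑ k, x k ≠ 0) :
    ofSimplex (toSimplex x) = x := by
  funext j
  rw [ofSimplex, sum_toSimplex, toSimplex]
  field_simp
  ring

theorem toSimplex_ofSimplex {t : ι → ℝ} (ht : 1 - ∑ k, t k ≠ 0) :
    toSimplex (ofSimplex t) = t := by
  funext j
  rw [toSimplex, sum_ofSimplex, ofSimplex]
  field_simp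
  ring

theorem one_add_sum_pos_of_mem_posOrthant {x : ι → ℝ} (hx : x ∈ posOrthant ι) :
    0 < 1 + ∑ k, x k := by
  have : 0 ≤ ∑ k, x k := Finset.sum_nonneg fun k _ => (hx k).le
  linarith

theorem mapsTo_toSimplex : Set.MapsTo toSimplex (posOrthant ι) (openSimplex ι) := by
  intro x hx
  have hpos := one_add_sum_pos_of_mem_posOrthant hx
  refine ⟨fun j => div_pos (hx j) hpos, ?_⟩
  rw [sum_toSimplex, div_lt_one hpos]
  linarith

theorem mapsTo_ofSimplex : Set.MapsTo ofSimplex (openSimplex ι) (posOrthant ι) :=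
  fun _ ht j => div_pos (ht.1 j) (sub_pos.2 ht.2)

theorem bijOn_toSimplex : Set.BijOn toSimplex (posOrthant ι) (openSimplex ι) :=
  Set.InvOn.bijOn
    ⟨fun _ hx => ofSimplex_toSimplex (one_add_sum_pos_of_mem_posOrthant hx).ne',
      fun _ ht => toSimplex_ofSimplex (sub_pos.2 ht.2).ne'⟩
    mapsTo_toSimplex mapsTo_ofSimplex

theorem measurableSet_posOrthant : MeasurableSet (posOrthant ι) := by
  simpa [posOrthant, Set.pi] using
    MeasurableSet.univ_pi fun _ : ι => measurableSet_Ioi (a := (0 : ℝ))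

def fderivToSimplex (x : ι → ℝ) : (ι → ℝ) →L[ℝ] (ι → ℝ) :=
  (1 + ∑ k, x k)⁻¹ • (ContinuousLinearMap.id ℝ _ +
    (-(1 + ∑ k, x k)⁻¹ • ∑ k, ContinuousLinearMap.proj k).smulRight x)

theorem hasFDerivAt_toSimplex {x : ι → ℝ} (hx : 1 + ∑ k, x k ≠ 0) :
    HasFDerivAt toSimplex (fderivToSimplex x) x := by
  have hsum : HasFDerivAt (fun y : ι → ℝ => ∑ k, y k) (∑ k, ContinuousLinearMap.proj k) x :=
    HasFDerivAt.fun_sum fun k _ => hasFDerivAt_apply (𝕜 := ℝ) (F' := fun _ : ι => ℝ) k x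
  have hsmul : (toSimplex : (ι → ℝ) → ι → ℝ) = fun y => (1 + ∑ k, y k)⁻¹ • y := by
    funext y j
    simp [toSimplex, div_eq_inv_mul]
  rw [hsmul]
  refine (((hasDerivAt_inv hx).comp_hasFDerivAt x (hsum.const_add 1)).smul
    (hasFDerivAt_id x)).congr_fderiv ?_
  ext v j
  simp only [fderivToSimplex, Function.comp_apply, id_eq, add_apply, smul_apply, neg_apply,
    sum_apply, ContinuousLinearMap.id_apply, ContinuousLinearMap.smulRight_apply,
    ContinuousLinearMap.proj_apply, Pi.add_apply, Pi.smul_apply, Pi.neg_apply, neg_smul,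
    smul_eq_mul, smul_add, neg_mul, smul_neg, add_right_inj, neg_inj]
  field_simp

theorem det_fderivToSimplex {x : ι → ℝ} (hx : 1 + ∑ k, x k ≠ 0) :
    (fderivToSimplex x).det = (1 + ∑ k, x k)⁻¹ ^ (Fintype.card ι + 1) := by
  rw [fderivToSimplex, ContinuousLinearMap.det, ContinuousLinearMap.toLinearMap_smul,
    LinearMap.det_smul, ContinuousLinearMap.toLinearMap_add, ContinuousLinearMap.coe_id,
    ContinuousLinearMap.coe_smulRight, LinearMap.det_id_add_smulRight,
    Module.finrank_fintype_fun_eq_card, pow_succ]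
  congr 1
  simp only [ContinuousLinearMap.toLinearMap_smul, ContinuousLinearMap.toLinearMap_sum,
    ContinuousLinearMap.coe_proj, LinearMap.smul_apply, LinearMap.coe_sum, LinearMap.coe_proj,
    Finset.sum_apply, Function.eval, smul_eq_mul, neg_mul]
  field_simp
  ring

theorem map_toSimplex_withDensity {n : ℕ} (hn : Fintype.card ι + 1 = n) :
    Measure.map toSimplex (((volume : Measure (ι → ℝ)).restrict (posOrthant ι)).withDensity
        fun x => ENNReal.ofReal ((1 + ∑ j, x j) ^ (-(n : ℤ))))
      = (volume : Measure (ι → ℝ)).restrict (openSimplex ι) := by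
  have hderiv : ∀ x ∈ posOrthant ι,
      HasFDerivWithinAt toSimplex (fderivToSimplex x) (posOrthant ι) x := fun x hx =>
    (hasFDerivAt_toSimplex (one_add_sum_pos_of_mem_posOrthant hx).ne').hasFDerivWithinAt
  rw [← bijOn_toSimplex.image_eq, ← map_withDensity_abs_det_fderiv_eq_addHaar _
    measurableSet_posOrthant.nullMeasurableSet hderiv bijOn_toSimplex.injOn]
  refine congrArg _ (withDensity_congr_ae ?_)
  filter_upwards [ae_restrict_mem measurableSet_posOrthant] with x hx
  have hpos := one_add_sum_pos_of_mem_posOrthant hx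
  rw [det_fderivToSimplex hpos.ne', abs_of_pos (by positivity), ← hn, zpow_neg, zpow_natCast,
    inv_pow]

end

/-- The map `t_j = x_j/(1 + ∑ x_k)` is a bijection from the open positive orthant onto
the open `(n−1)`-simplex, and it pushes the measure with density `(1+∑x)^{−n}` (with
respect to Lebesgue measure, restricted to the orthant) forward to the Lebesgue measure
on the simplex. -/
theorem stmt7 (n m : ℕ) (hn : 2 ≤ n) (hm : m = n - 1)
    (φ : (Fin m → ℝ) → (Fin m → ℝ)) (hφ : φ = fun x j => x j / (1 + ∑ k, x k))
    (S : Set (Fin m → ℝ)) (hS : S = {x | ∀ j, 0 < x j})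
    (T : Set (Fin m → ℝ)) (hT : T = {t | (∀ j, 0 < t j) ∧ ∑ j, t j < 1}) :
    Set.BijOn φ S T ∧
      Measure.map φ (((volume : Measure (Fin m → ℝ)).restrict S).withDensity
          fun x => ENNReal.ofReal ((1 + ∑ j, x j) ^ (-(n : ℤ))))
        = (volume : Measure (Fin m → ℝ)).restrict T := by
  subst hφ hS hT hm
  exact ⟨bijOn_toSimplex, map_toSimplex_withDensity (by rw [Fintype.card_fin]; omega)⟩
end

section
/- Let n ≥ 1, F ≥ 1, L ≥ 0, L' ≥ 1 be integers. Let g be a family of polynomials in ℂ[w₁,…,wₙ,v₁,…,vₙ], indexed by (F−1)-tuples (γ₂,…,γ_F) ∈ {1,…,n}^{F−1}, which is totally antisymmetric in its indices, with each member bihomogeneous of bidegree (L, L'−1), and which is trace-free: ∑_{β=1}^n ∂_{v_β} g(β, γ₃, …, γ_F) = 0 for all (γ₃,…,γ_F) (this condition is vacuous if F = 1). Define the antisymmetrized family h indexed by F-tuples by h(γ₁,…,γ_F) = ∑_{k=1}^F (−1)^{k+1} · v_{γ_k} · g(γ₁,…,γ̂_k,…,γ_F), where γ̂_k means the index γ_k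 is omitted. Then h is totally antisymmetric, each member is bihomogeneous of bidegree (L, L'), and its trace satisfies ∑_{β=1}^n ∂_{v_β} h(β, γ₂, …, γ_F) = (n + L' − F) · g(γ₂,…,γ_F) for all (γ₂,…,γ_F). (This is the computation ∂²Φ₊/∂χ^β∂w̄^β = (n + L' − F)·Φ₊^{(2)} in Appendix B of the paper, stated without Grassmann variables.) -/
open MvPolynomial

noncomputable section

/-- A family of polynomials indexed by tuples is totally antisymmetric if permuting the
index tuple multiplies the value by the sign of the permutation. -/
def AntisymFam (n m : ℕ)
    (f : (Fin m → Fin n) → MvPolynomial (Fin n ⊕ Fin n) ℂ) : Prop :=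
  ∀ (σ : Equiv.Perm (Fin m)) (γ : Fin m → Fin n),
    f (γ ∘ σ) = (Equiv.Perm.sign σ : ℤ) • f γ

/-- A family is trace-free if the contraction `∑_β ∂_{v_β} f(… β …)` over any one of its
index slots vanishes (for a totally antisymmetric family this is equivalent to the
vanishing of the contraction over the first slot; it is vacuous if `m = 0`). -/
def TraceFreeFam (n m : ℕ)
    (f : (Fin m → Fin n) → MvPolynomial (Fin n ⊕ Fin n) ℂ) : Prop :=
  ∀ (γ : Fin m → Fin n) (i : Fin m),
    ∑ β : Fin n, pderiv (Sum.inr β) (f (Function.update γ i β)) = 0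

/-- The antisymmetrized family `h(γ₁,…,γ_F) = ∑_k (−1)^{k+1} v_{γ_k} g(γ₁,…,γ̂_k,…,γ_F)`
(the analogue of multiplication by `w̄^α χ^α`). -/
def vWedge (n m : ℕ) (g : (Fin m → Fin n) → MvPolynomial (Fin n ⊕ Fin n) ℂ) :
    (Fin (m + 1) → Fin n) → MvPolynomial (Fin n ⊕ Fin n) ℂ :=
  fun γ => ∑ k : Fin (m + 1),
    (-1 : ℤ) ^ (k : ℕ) • (MvPolynomial.X (Sum.inr (γ k)) * g (γ ∘ k.succAbove))

/-!
Write `h = vWedge g`. Each permutation `σ` of the `F` slots satisfies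
`σ ∘ k.succAbove = (σ k).succAbove ∘ τ` with `sign τ = sign σ · (-1)^(k + σ k)`, so the `k`-th
summand of `h (γ ∘ σ)` is `sign σ` times the `σ k`-th summand of `h γ`; this gives antisymmetry.
Multiplying by a `v`-variable raises the `v`-degree by one and leaves the `w`-degree alone.

For the trace, the Leibniz rule turns the summand with `β` in front into `n·g + ∑ v_β ∂_β g`,
which is `(n + L' - 1)·g` by Euler's identity. In each of the other `F - 1` summands the derivative
of `v_{γ_k}` picks out `β = γ_k`, and a cycle of sign `(-1)^(k-1)` moves that index back into place;
together with the sign `(-1)^k` of the summand this contributes `-g`. The remaining part is a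
contraction of `g`, which vanishes because `g` is trace-free.
-/

open Equiv

theorem Fin.exists_perm_comp_succAbove {m : ℕ} (σ : Perm (Fin (m + 1))) (k : Fin (m + 1)) :
    ∃ τ : Perm (Fin m), σ ∘ k.succAbove = (σ k).succAbove ∘ τ ∧
      Perm.sign τ = Perm.sign σ * (-1) ^ ((k : ℕ) + σ k) := by
  set ρ : Perm (Fin (m + 1)) := (σ k).cycleRange * σ * k.cycleRange.symm
  obtain ⟨⟨p, τ⟩, hρ⟩ := Perm.decomposeFin.symm.surjective ρ
  obtain rfl : p = 0 := by
    simpa [ρ, Fin.cycleRange_symm_zero] using congrArg (· 0) hρ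
  refine ⟨τ, funext fun j => ?_, ?_⟩
  · have := congrArg (· j.succ) hρ
    simp only [Perm.decomposeFin_symm_apply_succ, swap_self, refl_apply, ρ, Perm.mul_apply,
      Fin.cycleRange_symm_succ] at this
    simp [← Fin.cycleRange_symm_succ, this]
  · have := congrArg Perm.sign hρ
    simp only [Perm.decomposeFin.symm_sign, if_true, one_mul, ρ, map_mul, Perm.sign_symm,
      Fin.sign_cycleRange] at this
    rw [this, pow_add]
    ac_rfl

theorem antisymFam_vWedge {n m : ℕ} {g : (Fin m → Fin n) → MvPolynomial (Fin n ⊕ Fin n) ℂ}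
    (hg : AntisymFam n m g) : AntisymFam n (m + 1) (vWedge n m g) := by
  intro σ γ
  have hterm : ∀ k : Fin (m + 1),
      (-1 : ℤ) ^ (k : ℕ) • (X (Sum.inr ((γ ∘ σ) k)) * g ((γ ∘ σ) ∘ k.succAbove)) =
        (Perm.sign σ : ℤ) • ((-1 : ℤ) ^ (σ k : ℕ) •
          (X (Sum.inr (γ (σ k))) * g (γ ∘ (σ k).succAbove))) := by
    intro k
    obtain ⟨τ, hcomp, hsign⟩ := Fin.exists_perm_comp_succAbove σ k
    rw [Function.comp_assoc, hcomp, ← Function.comp_assoc, hg τ, Function.comp_apply,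
      mul_smul_comm, smul_smul, smul_smul, hsign]
    congr 1
    push_cast
    ring_nf
    simp
  simp only [vWedge, hterm, ← Finset.smul_sum]
  congr 1
  exact Equiv.sum_comp σ fun k => (-1 : ℤ) ^ (k : ℕ) • (X (Sum.inr (γ k)) * g (γ ∘ k.succAbove))

theorem isWeightedHomogeneous_vWedge {M : Type*} [AddCommMonoid M] {n m : ℕ}
    {g : (Fin m → Fin n) → MvPolynomial (Fin n ⊕ Fin n) ℂ} {w : Fin n ⊕ Fin n → M} {e d : M}
    (hw : ∀ β, w (Sum.inr β) = e) (hg : ∀ γ, (g γ).IsWeightedHomogeneous w d)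
    (γ : Fin (m + 1) → Fin n) : (vWedge n m g γ).IsWeightedHomogeneous w (e + d) := by
  refine IsWeightedHomogeneous.sum _ _ _ fun k _ => ?_
  rw [← mem_weightedHomogeneousSubmodule]
  refine zsmul_mem ?_ _
  exact hw (γ k) ▸ (isWeightedHomogeneous_X ℂ w _).mul (hg _)

theorem MvPolynomial.IsWeightedHomogeneous.sum_X_inr_mul_pderiv_inr {R : Type*} [CommSemiring R]
    {n d : ℕ} {p : MvPolynomial (Fin n ⊕ Fin n) R} (hp : p.IsWeightedHomogeneous (vWt n) d) :
    ∑ β, X (Sum.inr β) * pderiv (Sum.inr β) p = d • p := by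
  simpa [vWt, Fintype.sum_sum_type] using hp.sum_weight_X_mul_pderiv

theorem sum_pderiv_inr_X_inr_mul_s13 {R : Type*} [CommSemiring R] {n d : ℕ}
    {p : MvPolynomial (Fin n ⊕ Fin n) R} (hp : p.IsWeightedHomogeneous (vWt n) d) :
    ∑ β, pderiv (Sum.inr β) (X (Sum.inr β) * p) = (n + d) • p := by
  simp [Finset.sum_add_distrib, hp.sum_X_inr_mul_pderiv_inr, add_smul, add_comm]

theorem TraceFreeFam.sum_pderiv_X_mul_update {n m : ℕ}
    {g : (Fin m → Fin n) → MvPolynomial (Fin n ⊕ Fin n) ℂ} (hg : TraceFreeFam n m g)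
    (δ : Fin m → Fin n) (i : Fin m) :
    ∑ β, pderiv (Sum.inr β) (X (Sum.inr (δ i)) * g (Function.update δ i β)) = g δ := by
  simp only [pderiv_mul, Finset.sum_add_distrib, ← Finset.mul_sum, hg δ i, mul_zero, add_zero,
    pderiv_X, Pi.single_apply, Sum.inr.injEq, ite_mul, one_mul, zero_mul,
    Finset.sum_ite_eq, Finset.mem_univ, if_true, Function.update_eq_self]

theorem sum_pderiv_X_mul_cons_removeNth {n m : ℕ}
    {g : (Fin (m + 1) → Fin n) → MvPolynomial (Fin n ⊕ Fin n) ℂ}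
    (hga : AntisymFam n (m + 1) g) (hgt : TraceFreeFam n (m + 1) g)
    (γ : Fin (m + 1) → Fin n) (j : Fin (m + 1)) :
    ∑ β, pderiv (Sum.inr β) (X (Sum.inr (γ j)) * g (Fin.cons β (j.removeNth γ))) =
      (-1 : ℤ) ^ (j : ℕ) • g γ := by
  have hupd : ∀ β, (Fin.cons β (j.removeNth γ) : Fin (m + 1) → Fin n) =
      Function.update (γ ∘ j.cycleRange.symm) 0 β := fun β => by
    rw [← Fin.cons_removeNth_eq_comp_cycleRange_symm γ j, Fin.update_cons_zero]
  simp_rw [hupd]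
  rw [show γ j = (γ ∘ j.cycleRange.symm) 0 by simp [Fin.cycleRange_symm_zero],
    hgt.sum_pderiv_X_mul_update, hga, Perm.sign_symm, Fin.sign_cycleRange]
  simp

theorem sum_pderiv_vWedge_cons {n m d : ℕ}
    {g : (Fin m → Fin n) → MvPolynomial (Fin n ⊕ Fin n) ℂ}
    (hga : AntisymFam n m g) (hgt : TraceFreeFam n m g)
    (hgd : ∀ γ, (g γ).IsWeightedHomogeneous (vWt n) d) (γ : Fin m → Fin n) :
    ∑ β, pderiv (Sum.inr β) (vWedge n m g (Fin.cons β γ)) = C ((n : ℂ) + d - m) * g γ := by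
  have hsucc : ∀ j : Fin m, ∑ β, pderiv (Sum.inr β) ((-1 : ℤ) ^ (j.succ : ℕ) •
      (X (Sum.inr ((Fin.cons β γ : Fin (m + 1) → Fin n) j.succ)) *
        g (Fin.cons β γ ∘ j.succ.succAbove))) = -g γ := by
    cases m with
    | zero => exact fun j => j.elim0
    | succ m =>
      intro j
      simp only [map_zsmul, ← Finset.smul_sum, Fin.cons_succ, Fin.cons_comp_succ_succAbove,
        sum_pderiv_X_mul_cons_removeNth hga hgt, smul_smul, Fin.val_succ, ← pow_add]
      rw [Odd.neg_one_pow ⟨j, by ring⟩, neg_one_smul]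
  simp only [vWedge, map_sum]
  rw [Finset.sum_comm, Fin.sum_univ_succ, Finset.sum_congr rfl fun j _ => hsucc j]
  simp only [Fin.val_zero, pow_zero, one_smul, Fin.cons_zero, Fin.succAbove_zero,
    Fin.cons_comp_succ, sum_pderiv_inr_X_inr_mul_s13 (hgd γ), Finset.sum_neg_distrib,
    Finset.sum_const, Finset.card_univ, Fintype.card_fin]
  rw [C_mul', ← Nat.cast_smul_eq_nsmul ℂ, ← Nat.cast_smul_eq_nsmul ℂ, ← neg_smul, ← add_smul]
  congr 1
  push_cast
  ring

theorem stmt13_general (n F₀ L L' : ℕ) (hL' : 1 ≤ L')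
    (g : (Fin F₀ → Fin n) → MvPolynomial (Fin n ⊕ Fin n) ℂ)
    (hga : AntisymFam n F₀ g)
    (hgh : ∀ γ, (g γ).IsWeightedHomogeneous (wWt n) L ∧
                (g γ).IsWeightedHomogeneous (vWt n) (L' - 1))
    (hgt : TraceFreeFam n F₀ g) :
    AntisymFam n (F₀ + 1) (vWedge n F₀ g)
    ∧ (∀ γ, ((vWedge n F₀ g) γ).IsWeightedHomogeneous (wWt n) L ∧
            ((vWedge n F₀ g) γ).IsWeightedHomogeneous (vWt n) L')
    ∧ ∀ γ' : Fin F₀ → Fin n,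
        ∑ β : Fin n, pderiv (Sum.inr β) (vWedge n F₀ g (Fin.cons β γ'))
          = MvPolynomial.C ((n : ℂ) + (L' : ℂ) - ((F₀ : ℂ) + 1)) * g γ' := by
  refine ⟨antisymFam_vWedge hga, fun γ => ⟨?_, ?_⟩, fun γ' => ?_⟩
  · simpa using isWeightedHomogeneous_vWedge (e := 0) (fun _ => rfl) (fun γ => (hgh γ).1) γ
  · simpa [Nat.add_sub_cancel' hL'] using
      isWeightedHomogeneous_vWedge (e := 1) (fun _ => rfl) (fun γ => (hgh γ).2) γ
  · rw [sum_pderiv_vWedge_cons hga hgt (fun γ => (hgh γ).2), Nat.cast_sub hL']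
    congr 2
    push_cast
    ring

/-- Appendix B of the paper: if `g` is a totally antisymmetric trace-free family of
bidegree `(L, L'−1)` indexed by `(F−1)`-tuples, then `h = v ∧ g` is totally
antisymmetric of bidegree `(L, L')` and its trace is `(n + L' − F)·g`.
Here `F = F₀ + 1 ≥ 1`. -/
theorem stmt13 (n F₀ L L' : ℕ) (hn : 1 ≤ n) (hL' : 1 ≤ L')
    (g : (Fin F₀ → Fin n) → MvPolynomial (Fin n ⊕ Fin n) ℂ)
    (hga : AntisymFam n F₀ g)
    (hgh : ∀ γ, (g γ).IsWeightedHomogeneous (wWt n) L ∧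
                (g γ).IsWeightedHomogeneous (vWt n) (L' - 1))
    (hgt : TraceFreeFam n F₀ g) :
    AntisymFam n (F₀ + 1) (vWedge n F₀ g)
    ∧ (∀ γ, ((vWedge n F₀ g) γ).IsWeightedHomogeneous (wWt n) L ∧
            ((vWedge n F₀ g) γ).IsWeightedHomogeneous (vWt n) L')
    ∧ ∀ γ' : Fin F₀ → Fin n,
        ∑ β : Fin n, pderiv (Sum.inr β) (vWedge n F₀ g (Fin.cons β γ'))
          = MvPolynomial.C ((n : ℂ) + (L' : ℂ) - ((F₀ : ℂ) + 1)) * g γ' :=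
  stmt13_general n F₀ L L' hL' g hga hgh hgt
end
end
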